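/- Let T > 0, τ > 0 with T/τ ≥ 4, and let N ≥ 1 photons have arrival times t_1, …, t_N that are independent and uniformly distributed on [0, T]. Then the probability that photon 1 survives equals (2/T) ∫₀^τ (1 − (t + τ)/T)^{N−1} dt + ((T − 2τ)/T)(1 − 2τ/T)^{N−1}, which equals [2(1 − τ/T)^N + (N − 2)(1 − 2τ/T)^N] / N. -/

import Mathlib

/-!
Conditioning on the arrival time `x` of photon 1, the other `N - 1` photons are
independent and each lands at distance `≥ τ` from `x` with probability `ℓ(x)/T`, where
`ℓ(x)` is the length of `[0, T] \ (x - τ, x + τ)`. So the survival probability is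
`T⁻¹ ∫₀ᵀ (ℓ(x)/T)^(N-1) dx`. When `2τ ≤ T`, `ℓ` equals `T - 2τ` on `[τ, T - τ]` and is
symmetric under `x ↦ T - x`, which gives the first expression; the second is the elementary
integral of a power of an affine function.
-/

open MeasureTheory

/-- The uniform probability measure on `[0, T]`. -/
noncomputable def unifIcc (T : ℝ) : Measure ℝ :=
  (ENNReal.ofReal T)⁻¹ • volume.restrict (Set.Icc 0 T)

open Set

theorem pi_setOf_forall_ne_zero_eq_lintegral {α : Type*} [MeasurableSpace α] (μ : Measure α)
    [SigmaFinite μ] {s : Set (α × α)} (hs : MeasurableSet s) (n : ℕ) :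
    Measure.pi (fun _ : Fin (n + 1) => μ) {t | ∀ j, j ≠ 0 → (t 0, t j) ∈ s} =
      ∫⁻ x, μ (Prod.mk x ⁻¹' s) ^ n ∂μ := by
  set A : Set (α × (Fin n → α)) := ⋂ j, (fun p => (p.1, p.2 j)) ⁻¹' s
  have hA : MeasurableSet A :=
    .iInter fun j => (measurable_fst.prodMk ((measurable_pi_apply j).comp measurable_snd)) hs
  have hpre : {t : Fin (n + 1) → α | ∀ j, j ≠ 0 → (t 0, t j) ∈ s} =
      MeasurableEquiv.piFinSuccAbove (fun _ => α) 0 ⁻¹' A := by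
    ext t
    simp only [A, mem_ofPred_eq, mem_preimage, mem_iInter, MeasurableEquiv.piFinSuccAbove_apply]
    exact ⟨fun h j => h j.succ j.succ_ne_zero, fun h j hj => by
      obtain ⟨k, rfl⟩ := Fin.exists_succ_eq.2 hj
      exact h k⟩
  have hslice (x : α) : Prod.mk x ⁻¹' A = univ.pi fun _ => Prod.mk x ⁻¹' s := by
    ext y; simp [A, mem_pi]
  rw [hpre, (measurePreserving_piFinSuccAbove (fun _ => μ) 0).measure_preimage
    hA.nullMeasurableSet, Measure.prod_apply hA]
  simp_rw [hslice, Measure.pi_pi, Finset.prod_const, Finset.card_univ, Fintype.card_fin]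

theorem isProbabilityMeasure_unifIcc {T : ℝ} (hT : 0 < T) : IsProbabilityMeasure (unifIcc T) :=
  ⟨by simp [unifIcc, ENNReal.inv_mul_cancel, hT]⟩

theorem ae_unifIcc_mem_Icc (T : ℝ) : ∀ᵐ x ∂unifIcc T, x ∈ Icc 0 T :=
  Measure.ae_smul_measure (ae_restrict_mem measurableSet_Icc) _

theorem integral_unifIcc {T : ℝ} (hT : 0 ≤ T) (f : ℝ → ℝ) :
    ∫ x, f x ∂unifIcc T = T⁻¹ * ∫ x in 0..T, f x := by
  rw [unifIcc, integral_smul_measure, intervalIntegral.integral_of_le hT,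
    integral_Icc_eq_integral_Ioc, ENNReal.toReal_inv, ENNReal.toReal_ofReal hT, smul_eq_mul]

/-- The length of `{y ∈ [0, T] | τ ≤ |x - y|}`. -/
noncomputable def farLength (T τ x : ℝ) : ℝ := max (x - τ) 0 + max (T - x - τ) 0

theorem farLength_nonneg (T τ x : ℝ) : 0 ≤ farLength T τ x := by
  unfold farLength; positivity

theorem continuous_farLength (T τ : ℝ) : Continuous (farLength T τ) := by
  unfold farLength; fun_prop

theorem farLength_sub_left (T τ x : ℝ) : farLength T τ (T - x) = farLength T τ x := by
  rw [farLength, farLength, add_comm, sub_sub_cancel]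

theorem farLength_of_le {T τ x : ℝ} (hx : x ≤ τ) (hxT : x + τ ≤ T) :
    farLength T τ x = T - (x + τ) := by
  rw [farLength, max_eq_right (by linarith), max_eq_left (by linarith)]; ring

theorem farLength_of_mem {T τ x : ℝ} (hx : τ ≤ x) (hxT : x + τ ≤ T) :
    farLength T τ x = T - 2 * τ := by
  rw [farLength, max_eq_left (by linarith), max_eq_left (by linarith)]; ring

theorem volume_Icc_inter_setOf_le_abs_sub {T τ x : ℝ} (hτ : 0 < τ) (hx : x ∈ Icc 0 T) :
    volume (Icc 0 T ∩ {y | τ ≤ |x - y|}) = ENNReal.ofReal (farLength T τ x) := by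
  have hsplit : Icc 0 T ∩ {y | τ ≤ |x - y|} = Icc 0 (x - τ) ∪ Icc (x + τ) T := by
    ext y
    simp only [mem_inter_iff, mem_ofPred_eq, mem_Icc, mem_union, le_abs, neg_sub]
    constructor
    · rintro ⟨⟨h0, hT⟩, h | h⟩
      · exact .inl ⟨h0, by linarith⟩
      · exact .inr ⟨by linarith, hT⟩
    · rintro (⟨h0, h⟩ | ⟨h, hT⟩)
      · exact ⟨⟨h0, by linarith [hx.2]⟩, .inl (by linarith)⟩
      · exact ⟨⟨by linarith [hx.1], hT⟩, .inr (by linarith)⟩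
  have hdisj : Disjoint (Icc 0 (x - τ)) (Icc (x + τ) T) :=
    disjoint_left.2 fun y h h' => by linarith [h.2, h'.1]
  rw [hsplit, measure_union hdisj measurableSet_Icc, Real.volume_Icc, Real.volume_Icc, farLength,
    ENNReal.ofReal_add (le_max_right _ _) (le_max_right _ _), ENNReal.ofReal_max,
    ENNReal.ofReal_max]
  simp [sub_sub]

theorem unifIcc_setOf_le_abs_sub {T τ x : ℝ} (hT : 0 < T) (hτ : 0 < τ) (hx : x ∈ Icc 0 T) :
    unifIcc T {y | τ ≤ |x - y|} = ENNReal.ofReal (farLength T τ x / T) := by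
  rw [unifIcc, Measure.smul_apply,
    Measure.restrict_apply (measurableSet_le (by fun_prop) (by fun_prop)), inter_comm,
    volume_Icc_inter_setOf_le_abs_sub hτ hx, smul_eq_mul, ENNReal.ofReal_div_of_pos hT,
    ENNReal.div_eq_inv_mul]

theorem survival_toReal_eq_integral {T τ : ℝ} (hT : 0 < T) (hτ : 0 < τ) (n : ℕ) :
    (Measure.pi (fun _ : Fin (n + 1) => unifIcc T) {t | ∀ j, j ≠ 0 → τ ≤ |t 0 - t j|}).toReal =
      T⁻¹ * ∫ x in 0..T, (farLength T τ x / T) ^ n := by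
  have := isProbabilityMeasure_unifIcc hT
  have hfar : ∀ x, 0 ≤ (farLength T τ x / T) ^ n := fun x =>
    pow_nonneg (div_nonneg (farLength_nonneg T τ x) hT.le) n
  have hs : MeasurableSet {p : ℝ × ℝ | τ ≤ |p.1 - p.2|} :=
    measurableSet_le measurable_const (by fun_prop)
  have hconditioned := pi_setOf_forall_ne_zero_eq_lintegral (unifIcc T) hs n
  simp only [mem_ofPred_eq, preimage_ofPred_eq] at hconditioned
  rw [hconditioned, ← integral_unifIcc hT.le,
    integral_eq_lintegral_of_nonneg_ae (.of_forall hfar)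
      (((continuous_farLength T τ).div_const T).pow n).aestronglyMeasurable]
  congr 1
  refine lintegral_congr_ae ?_
  filter_upwards [ae_unifIcc_mem_Icc T] with x hx
  rw [unifIcc_setOf_le_abs_sub hT hτ hx,
    ENNReal.ofReal_pow (div_nonneg (farLength_nonneg T τ x) hT.le)]

theorem integral_farLength_div_pow {T τ : ℝ} (hτ : 0 < τ) (hτT : 2 * τ ≤ T) (n : ℕ) :
    ∫ x in 0..T, (farLength T τ x / T) ^ n =
      2 * (∫ t in 0..τ, (1 - (t + τ) / T) ^ n) + (T - 2 * τ) * (1 - 2 * τ / T) ^ n := by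
  have hint (a b : ℝ) : IntervalIntegrable (fun x => (farLength T τ x / T) ^ n) volume a b :=
    (((continuous_farLength T τ).div_const T).pow n).intervalIntegrable a b
  have hleft : ∫ x in 0..τ, (farLength T τ x / T) ^ n = ∫ t in 0..τ, (1 - (t + τ) / T) ^ n := by
    refine intervalIntegral.integral_congr fun x hx => ?_
    rw [uIcc_of_le hτ.le] at hx
    rw [farLength_of_le hx.2 (by linarith [hx.2]), sub_div, div_self (by linarith)]
  have hmiddle :
      ∫ x in τ..T - τ, (farLength T τ x / T) ^ n = (T - 2 * τ) * (1 - 2 * τ / T) ^ n := by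
    rw [intervalIntegral.integral_congr (g := fun _ => (1 - 2 * τ / T) ^ n) fun x hx => ?_,
      intervalIntegral.integral_const, smul_eq_mul, sub_sub, ← two_mul]
    rw [uIcc_of_le (by linarith), mem_Icc] at hx
    rw [farLength_of_mem hx.1 (by linarith [hx.2]), sub_div, div_self (by linarith)]
  have hright :
      ∫ x in 0..τ, (farLength T τ x / T) ^ n = ∫ x in T - τ..T, (farLength T τ x / T) ^ n := by
    simpa only [farLength_sub_left, sub_self, sub_zero] using
      intervalIntegral.integral_comp_sub_left (fun x => (farLength T τ x / T) ^ n) T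
        (a := 0) (b := τ)
  rw [← intervalIntegral.integral_add_adjacent_intervals (hint 0 τ) (hint τ T),
    ← intervalIntegral.integral_add_adjacent_intervals (hint τ (T - τ)) (hint (T - τ) T),
    hmiddle, ← hright, hleft]
  ring

theorem integral_one_sub_add_div_pow {T : ℝ} (hT : T ≠ 0) (τ : ℝ) (n : ℕ) :
    ∫ t in 0..τ, (1 - (t + τ) / T) ^ n =
      T * ((1 - τ / T) ^ (n + 1) - (1 - 2 * τ / T) ^ (n + 1)) / (n + 1) := by
  have hshift (t : ℝ) : 1 - (t + τ) / T = 1 - τ / T - t / T := by ring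
  simp only [hshift]
  rw [intervalIntegral.integral_comp_sub_div (fun x => x ^ n) hT, integral_pow, smul_eq_mul,
    zero_div, sub_zero, show 1 - τ / T - τ / T = 1 - 2 * τ / T by ring]
  ring

/-- For `T/τ ≥ 4` and `N ≥ 1` photons with i.i.d. uniform
arrival times on `[0, T]`, the probability that photon `1` survives (no other
photon within `τ` of it) equals
`(2/T) ∫₀^τ (1 − (t + τ)/T)^{N−1} dt + ((T − 2τ)/T)(1 − 2τ/T)^{N−1}`, which
equals `(2(1 − τ/T)^N + (N − 2)(1 − 2τ/T)^N) / N`. -/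
theorem survival_probability_first_photon (T τ : ℝ) (hT : 0 < T) (hτ : 0 < τ)
    (hratio : 4 ≤ T / τ) (N : ℕ) (hN : 1 ≤ N) :
    ((Measure.pi fun _ : Fin N => unifIcc T)
        {t : Fin N → ℝ | ∀ j : Fin N, j ≠ ⟨0, hN⟩ → τ ≤ |t ⟨0, hN⟩ - t j|}).toReal =
      (2 / T) * (∫ t in (0 : ℝ)..τ, (1 - (t + τ) / T) ^ (N - 1))
        + ((T - 2 * τ) / T) * (1 - 2 * τ / T) ^ (N - 1) ∧
    (2 / T) * (∫ t in (0 : ℝ)..τ, (1 - (t + τ) / T) ^ (N - 1))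
        + ((T - 2 * τ) / T) * (1 - 2 * τ / T) ^ (N - 1) =
      (2 * (1 - τ / T) ^ N + ((N : ℝ) - 2) * (1 - 2 * τ / T) ^ N) / N := by
  have hτT : 2 * τ ≤ T := by linarith [(le_div_iff₀ hτ).1 hratio]
  obtain ⟨n, rfl⟩ : ∃ n, N = n + 1 := ⟨N - 1, by omega⟩
  simp only [Nat.add_sub_cancel, Nat.cast_add, Nat.cast_one]
  constructor
  · rw [show (⟨0, hN⟩ : Fin (n + 1)) = 0 from rfl, survival_toReal_eq_integral hT hτ,
      integral_farLength_div_pow hτ hτT]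
    field_simp
  · rw [integral_one_sub_add_div_pow hT.ne', show (T - 2 * τ) / T = 1 - 2 * τ / T by field_simp]
    generalize 1 - τ / T = a, 1 - 2 * τ / T = b
    field_simp
    ring
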